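/- Let φ(x) = exp(-x²). Then for every λ ∈ (0, 1) and every real number x, |P_∞(λ, x)| ≤ 24/(1 + x²). -/

import Mathlib

/-!
Write `φ t = exp (-t ^ 2)`. Since `0 ≤ φ ≤ 1` and `∑_{k ≥ 1} |a_k| ≤ 1` (for `k ≥ 3`,
`|a_k| ≤ 4 / (π (k - 2) (k - 1) k)` telescopes to a tail of at most `1 / π`), we get
`|P_∞(λ, x)| ≤ 2 φ(x) + ∑_k |a_k| (φ(x + λk) + φ(x - λk))`, the last sum being at most `2`;
with `(1 + x²) φ(x) ≤ 1` this settles `x² ≤ 10`.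
For `x² ≥ 10`, and `x ≥ 0` by evenness, the weight `1 + x²` is absorbed term by term: by
`φ(x)`, `φ(x + λk)`, and `φ(x - λk)` when `|x - λk| ≥ x / 4`. Otherwise `λk > 3x/4`, so
`|a_k| ≤ 3 / k³ ≤ 64 λ³ / (9 x³)`, while `∑_k φ(x - λk) ≤ 16 / (3 λ)` by comparing
`φ t ≤ (4/3) e^{-|t|}` with two geometric series of ratio `e^{-λ}`.
-/

open Real

/-- The Fourier cosine coefficients of the auxiliary function `H`. -/
noncomputable def a : ℕ → ℝ
  | 0 => 3 / 4
  | 1 => 4 / (3 * Real.pi)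
  | 2 => -(1 / 4)
  | k => -4 * Real.sin (k * Real.pi / 2) / (Real.pi * k * (k ^ 2 - 4))

/-- `A_∞(λ) = -Σ_{k=1}^∞ a_k φ(λk)`. -/
noncomputable def Ainf (φ : ℝ → ℝ) (lam : ℝ) : ℝ :=
  -∑' k : ℕ, a (k + 1) * φ (lam * (k + 1))

/-- `P_∞(λ, x) = 2 A_∞(λ) φ(x) + Σ_{k=1}^∞ a_k (φ(x + λk) + φ(x - λk))`. -/
noncomputable def Pinf (φ : ℝ → ℝ) (lam x : ℝ) : ℝ :=
  2 * Ainf φ lam * φ x +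
    ∑' k : ℕ, a (k + 1) * (φ (x + lam * (k + 1)) + φ (x - lam * (k + 1)))

open Finset

lemma a_add_three (n : ℕ) :
    a (n + 3) = -4 * sin ((n + 3) * π / 2) / (π * (n + 3) * ((n + 3) ^ 2 - 4)) := by
  simp only [a]
  push_cast
  ring_nf

lemma abs_a_add_three_le (n : ℕ) : |a (n + 3)| ≤ 4 / (π * ((n + 1) * (n + 3) * (n + 5))) := by
  have hden : π * (n + 3) * ((n + 3 : ℝ) ^ 2 - 4) = π * ((n + 1) * (n + 3) * (n + 5)) := by ring
  rw [a_add_three, hden, abs_div,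
    abs_of_pos (show 0 < π * ((n + 1 : ℝ) * (n + 3) * (n + 5)) by positivity), abs_mul, abs_neg,
    abs_of_pos four_pos]
  gcongr
  linarith [abs_sin_le_one ((n + 3) * π / 2)]

lemma abs_a_add_three_le' (n : ℕ) :
    |a (n + 3)| ≤ 4 / π * (1 / (((n : ℝ) + 1) * (n + 2) * (n + 3))) := by
  refine (abs_a_add_three_le n).trans ?_
  rw [div_mul_div_comm, mul_one]
  gcongr 4 / (π * ?_)
  nlinarith [n.cast_nonneg (α := ℝ)]

lemma abs_a_succ_le (k : ℕ) : |a (k + 1)| ≤ 3 / (k + 1) ^ 3 := by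
  have hπ := pi_gt_three
  match k with
  | 0 =>
    rw [show a 1 = 4 / (3 * π) from rfl, abs_of_pos (by positivity)]
    norm_num
    rw [div_le_iff₀ (by positivity)]
    linarith
  | 1 => norm_num [show a 2 = -(1 / 4) from rfl]
  | m + 2 =>
    refine (abs_a_add_three_le m).trans ?_
    rw [div_le_div_iff₀ (by positivity) (by positivity), show ((m + 2 : ℕ) : ℝ) + 1 = m + 3 by
      push_cast; ring]
    have hm : (0 : ℝ) ≤ m := m.cast_nonneg
    have hcube : 4 * ((m : ℝ) + 3) ^ 3 ≤ 9 * ((m + 1) * (m + 3) * (m + 5)) := by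
      nlinarith [mul_nonneg (by positivity : (0 : ℝ) ≤ m + 3)
        (by positivity : (0 : ℝ) ≤ 5 * m ^ 2 + 30 * m + 9)]
    nlinarith [mul_le_mul_of_nonneg_left hπ.le
      (by positivity : (0 : ℝ) ≤ (m + 1) * (m + 3) * (m + 5))]

lemma sum_range_inv_succ_mul_succ_mul_succ_le (N : ℕ) :
    ∑ n ∈ range N, 1 / (((n : ℝ) + 1) * (n + 2) * (n + 3)) ≤ 1 / 4 := by
  have htel (n : ℕ) : 1 / (((n : ℝ) + 1) * (n + 2) * (n + 3)) =
      1 / (2 * ((n : ℝ) + 1) * (n + 2)) -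
        1 / (2 * (((n + 1 : ℕ) : ℝ) + 1) * ((n + 1 : ℕ) + 2)) := by
    push_cast
    field_simp
    ring
  rw [sum_congr rfl fun n _ => htel n, sum_range_sub']
  norm_num
  positivity

lemma summable_inv_succ_mul_succ_mul_succ :
    Summable fun n : ℕ => 1 / (((n : ℝ) + 1) * (n + 2) * (n + 3)) :=
  summable_of_sum_range_le (fun _ => by positivity) sum_range_inv_succ_mul_succ_mul_succ_le

lemma summable_abs_a_succ : Summable fun k => |a (k + 1)| :=
  (summable_nat_add_iff 2).1 <| .of_nonneg_of_le (fun _ => abs_nonneg _)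
    abs_a_add_three_le' (summable_inv_succ_mul_succ_mul_succ.mul_left _)

lemma tsum_abs_a_succ_le_one : ∑' k, |a (k + 1)| ≤ 1 := by
  have htail : ∑' n, |a (n + 2 + 1)| ≤ 1 / π := calc
    ∑' n, |a (n + 2 + 1)| ≤ ∑' n : ℕ, 4 / π * (1 / (((n : ℝ) + 1) * (n + 2) * (n + 3))) :=
      ((summable_nat_add_iff 2).2 summable_abs_a_succ).tsum_le_tsum abs_a_add_three_le'
        (summable_inv_succ_mul_succ_mul_succ.mul_left _)
    _ ≤ 4 / π * (1 / 4) := by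
      rw [tsum_mul_left]
      gcongr
      exact tsum_le_of_sum_range_le (fun _ => by positivity)
        sum_range_inv_succ_mul_succ_mul_succ_le
    _ = 1 / π := by ring
  rw [← summable_abs_a_succ.sum_add_tsum_nat_add 2]
  simp only [sum_range_succ, sum_range_zero]
  rw [show a (0 + 1) = 4 / (3 * π) from rfl, show a (1 + 1) = -(1 / 4) from rfl]
  have hπ := pi_gt_d2
  rw [abs_of_pos (by positivity), abs_neg, abs_of_pos (by norm_num)]
  have : 4 / (3 * π) + 1 / π ≤ 3 / 4 := by
    rw [div_add_div _ _ (by positivity) (by positivity), div_le_iff₀ (by positivity)]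
    nlinarith
  linarith

lemma exp_neg_le_inv_one_add_div_pow {y : ℝ} (hy : 0 ≤ y) (n : ℕ) :
    exp (-y) ≤ ((1 + y / n) ^ n)⁻¹ := by
  rw [exp_neg]
  refine inv_anti₀ (by positivity) ?_
  simpa [neg_div] using
    one_sub_div_pow_le_exp_neg (n := n) (t := -y) (by linarith [n.cast_nonneg (α := ℝ)])

lemma exp_neg_sq_le_one (t : ℝ) : exp (-t ^ 2) ≤ 1 :=
  exp_le_one_iff.2 (neg_nonpos.2 (sq_nonneg t))

lemma one_add_sq_mul_exp_neg_sq_le_one (t : ℝ) : (1 + t ^ 2) * exp (-t ^ 2) ≤ 1 := by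
  have := exp_neg_le_inv_one_add_div_pow (sq_nonneg t) 1
  rw [Nat.cast_one, div_one, pow_one] at this
  rwa [← le_div_iff₀' (by positivity), one_div]

lemma one_add_sq_mul_exp_neg_sq_le_of_ten_le {t : ℝ} (ht : 10 ≤ t ^ 2) :
    (1 + t ^ 2) * exp (-t ^ 2) ≤ 1 / 5 := by
  have := exp_neg_le_inv_one_add_div_pow (sq_nonneg t) 3
  calc (1 + t ^ 2) * exp (-t ^ 2) ≤ (1 + t ^ 2) * ((1 + t ^ 2 / 3) ^ 3)⁻¹ := by
        gcongr; exact_mod_cast this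
    _ ≤ 1 / 5 := by
      rw [← div_eq_mul_inv, div_le_div_iff₀ (by positivity) (by norm_num)]
      nlinarith [mul_nonneg (sub_nonneg.2 ht) (sq_nonneg (t ^ 2))]

lemma one_add_sq_mul_exp_neg_sq_le_of_sq_le {x u : ℝ} (hxu : x ^ 2 ≤ 16 * u ^ 2) :
    (1 + x ^ 2) * exp (-u ^ 2) ≤ 83 / 10 := by
  have := exp_neg_le_inv_one_add_div_pow (sq_nonneg u) 2
  calc (1 + x ^ 2) * exp (-u ^ 2) ≤ (1 + x ^ 2) * ((1 + x ^ 2 / 32) ^ 2)⁻¹ := by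
        gcongr
        refine this.trans (inv_anti₀ (by positivity) (pow_le_pow_left₀ (by positivity) ?_ 2))
        push_cast
        linarith
    _ ≤ 83 / 10 := by
      rw [← div_eq_mul_inv, div_le_iff₀ (by positivity)]
      nlinarith [sq_nonneg (x ^ 2 - 30)]

lemma exp_neg_sq_le_exp_neg_abs (t : ℝ) : exp (-t ^ 2) ≤ 4 / 3 * exp (-|t|) := by
  have hquarter : exp (1 / 4) ≤ 4 / 3 := by
    have := one_sub_le_exp_neg (1 / 4 : ℝ)
    rw [exp_neg] at this
    rw [← inv_inv (exp _), show (4 / 3 : ℝ) = (3 / 4)⁻¹ by norm_num]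
    exact inv_anti₀ (by norm_num) (by linarith)
  calc exp (-t ^ 2) ≤ exp (1 / 4 + -|t|) := by
        rw [exp_le_exp]
        nlinarith [sq_abs t, sq_nonneg (|t| - 1 / 2)]
    _ ≤ 4 / 3 * exp (-|t|) := by rw [exp_add]; gcongr

lemma half_le_one_sub_exp_neg {lam : ℝ} (hl0 : 0 ≤ lam) (hl1 : lam ≤ 1) :
    lam / 2 ≤ 1 - exp (-lam) := by
  have := exp_neg_le_inv_one_add_div_pow hl0 1
  rw [Nat.cast_one, div_one, pow_one] at this
  have : (1 + lam)⁻¹ ≤ 1 - lam / 2 := by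
    rw [inv_le_iff_one_le_mul₀ (by positivity)]
    nlinarith
  linarith

lemma summable_and_tsum_le_of_le_geometric_two_sided {f : ℕ → ℝ} {r : ℝ} (hr0 : 0 ≤ r)
    (hr1 : r < 1) {N : ℕ} (hf0 : ∀ k, 0 ≤ f k) (hlt : ∀ k < N, f k ≤ r ^ (N - 1 - k))
    (hge : ∀ k, f (k + N) ≤ r ^ k) :
    Summable f ∧ ∑' k, f k ≤ 2 / (1 - r) := by
  have hgeom := summable_geometric_of_lt_one hr0 hr1
  have htail : Summable fun k => f (k + N) := .of_nonneg_of_le (fun _ => hf0 _) hge hgeom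
  have hf : Summable f := (summable_nat_add_iff N).1 htail
  refine ⟨hf, ?_⟩
  have head : ∑ k ∈ range N, f k ≤ (1 - r)⁻¹ := calc
    ∑ k ∈ range N, f k ≤ ∑ k ∈ range N, r ^ (N - 1 - k) :=
      sum_le_sum fun k hk => hlt k (mem_range.1 hk)
    _ = ∑ k ∈ range N, r ^ k := sum_range_reflect (r ^ ·) N
    _ ≤ (1 - r)⁻¹ :=
      tsum_geometric_of_lt_one hr0 hr1 ▸ hgeom.sum_le_tsum _ fun k _ => pow_nonneg hr0 k
  have tail : ∑' k, f (k + N) ≤ (1 - r)⁻¹ :=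
    tsum_geometric_of_lt_one hr0 hr1 ▸ htail.tsum_le_tsum hge hgeom
  rw [← hf.sum_add_tsum_nat_add N, div_eq_mul_inv]
  linarith

lemma summable_and_tsum_exp_neg_abs_sub_mul_succ_le (x : ℝ) {lam : ℝ} (hl : 0 < lam) :
    Summable (fun k : ℕ => exp (-|x - lam * (k + 1)|)) ∧
      ∑' k : ℕ, exp (-|x - lam * (k + 1)|) ≤ 2 / (1 - exp (-lam)) := by
  set N := ⌊x / lam⌋₊
  have hN : x < lam * (N + 1) := by
    have := Nat.lt_floor_add_one (x / lam)
    rwa [div_lt_iff₀ hl, mul_comm] at this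
  refine summable_and_tsum_le_of_le_geometric_two_sided (N := N) (exp_pos _).le
    (exp_lt_one_iff.2 (by linarith)) (fun _ => (exp_pos _).le) (fun k hk => ?_) (fun k => ?_) <;>
    rw [← exp_nat_mul, exp_le_exp, mul_neg, neg_le_neg_iff]
  · have hNx : lam * N ≤ x := by
      rw [← le_div_iff₀' hl]
      exact (Nat.le_floor_iff' (by omega)).1 le_rfl
    rw [Nat.cast_sub (by omega), Nat.cast_sub (by omega)]
    push_cast
    nlinarith [le_abs_self (x - lam * (k + 1))]
  · push_cast
    nlinarith [neg_abs_le (x - lam * (k + N + 1))]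

lemma summable_a_succ_mul {g : ℕ → ℝ} {C : ℝ} (hg : ∀ k, |g k| ≤ C) :
    Summable fun k => a (k + 1) * g k :=
  .of_norm <| .of_nonneg_of_le (fun _ => norm_nonneg _)
    (fun k => by
      rw [norm_mul, Real.norm_eq_abs, Real.norm_eq_abs]
      exact mul_le_mul_of_nonneg_left (hg k) (abs_nonneg _))
    (summable_abs_a_succ.mul_right C)

lemma abs_tsum_a_succ_mul_le {g : ℕ → ℝ} {C : ℝ} (hg : ∀ k, |g k| ≤ C) :
    |∑' k, a (k + 1) * g k| ≤ ∑' k, |a (k + 1)| * |g k| := by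
  simpa only [Real.norm_eq_abs, abs_mul] using
    norm_tsum_le_tsum_norm (summable_a_succ_mul hg).norm

lemma tsum_abs_a_succ_mul_le {g : ℕ → ℝ} {C : ℝ} (hC : 0 ≤ C) (hg : ∀ k, |g k| ≤ C) :
    ∑' k, |a (k + 1)| * |g k| ≤ C := by
  calc ∑' k, |a (k + 1)| * |g k| ≤ ∑' k, |a (k + 1)| * C := by
        refine Summable.tsum_le_tsum (fun k => by gcongr; exact hg k) ?_
          (summable_abs_a_succ.mul_right C)
        simpa only [abs_mul] using (summable_a_succ_mul hg).abs
    _ ≤ 1 * C := by rw [tsum_mul_right]; gcongr; exact tsum_abs_a_succ_le_one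
    _ = C := one_mul C

noncomputable def absSeries (φ : ℝ → ℝ) (lam x : ℝ) : ℝ :=
  ∑' k : ℕ, |a (k + 1)| * (φ (x + lam * (k + 1)) + φ (x - lam * (k + 1)))

lemma abs_Ainf_le_one {φ : ℝ → ℝ} (hφ : ∀ t, |φ t| ≤ 1) (lam : ℝ) : |Ainf φ lam| ≤ 1 := by
  rw [Ainf, abs_neg]
  exact (abs_tsum_a_succ_mul_le fun _ => hφ _).trans
    (tsum_abs_a_succ_mul_le zero_le_one fun _ => hφ _)

lemma abs_Pinf_le {φ : ℝ → ℝ} (h0 : ∀ t, 0 ≤ φ t) (h1 : ∀ t, φ t ≤ 1) (lam x : ℝ) :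
    |Pinf φ lam x| ≤ 2 * φ x + absSeries φ lam x := by
  have hφ t : |φ t| ≤ 1 := abs_le.2 ⟨by linarith [h0 t], h1 t⟩
  have hpair (k : ℕ) : |φ (x + lam * (k + 1)) + φ (x - lam * (k + 1))| ≤ 2 := by
    rw [abs_of_nonneg (add_nonneg (h0 _) (h0 _))]
    linarith [h1 (x + lam * (k + 1)), h1 (x - lam * (k + 1))]
  have hA : |2 * Ainf φ lam * φ x| ≤ 2 * φ x := by
    rw [abs_mul, abs_mul, abs_two, abs_of_nonneg (h0 x)]
    nlinarith [abs_Ainf_le_one hφ lam, h0 x]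
  have hS := abs_tsum_a_succ_mul_le hpair
  simp only [abs_of_nonneg (add_nonneg (h0 _) (h0 _))] at hS
  rw [Pinf, absSeries]
  exact (abs_add_le _ _).trans (add_le_add hA hS)

lemma absSeries_le_two {φ : ℝ → ℝ} (h0 : ∀ t, 0 ≤ φ t) (h1 : ∀ t, φ t ≤ 1) (lam x : ℝ) :
    absSeries φ lam x ≤ 2 := by
  have hpair (k : ℕ) : |φ (x + lam * (k + 1)) + φ (x - lam * (k + 1))| ≤ 2 := by
    rw [abs_of_nonneg (add_nonneg (h0 _) (h0 _))]
    linarith [h1 (x + lam * (k + 1)), h1 (x - lam * (k + 1))]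
  have := tsum_abs_a_succ_mul_le zero_le_two hpair
  simp only [abs_of_nonneg (add_nonneg (h0 _) (h0 _))] at this
  rwa [absSeries]

lemma Pinf_neg {φ : ℝ → ℝ} (hφ : ∀ t, φ (-t) = φ t) (lam x : ℝ) :
    Pinf φ lam (-x) = Pinf φ lam x := by
  rw [Pinf, Pinf, hφ]
  congr 1
  refine tsum_congr fun k => ?_
  rw [show -x + lam * (k + 1) = -(x - lam * (k + 1)) by ring,
    show -x - lam * (k + 1) = -(x + lam * (k + 1)) by ring, hφ, hφ, add_comm (φ (x - _))]

lemma one_add_sq_mul_abs_a_succ_mul_gaussian_le {lam x : ℝ} (hl : 0 ≤ lam) (hx : 0 ≤ x)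
    (hx10 : 10 ≤ x ^ 2) (k : ℕ) :
    (1 + x ^ 2) * (|a (k + 1)| * (exp (-(x + lam * (k + 1)) ^ 2) + exp (-(x - lam * (k + 1)) ^ 2)))
      ≤ 17 / 2 * |a (k + 1)| +
        256 * lam ^ 3 * (1 + x ^ 2) / (27 * x ^ 3) * exp (-|x - lam * (k + 1)|) := by
  set t := lam * (k + 1) with ht_def
  have ht : 0 ≤ t := by positivity
  have hx0 : 0 < x := by nlinarith
  have hplus : (1 + x ^ 2) * exp (-(x + t) ^ 2) ≤ 1 / 5 := by
    refine le_trans ?_ (one_add_sq_mul_exp_neg_sq_le_of_ten_le hx10)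
    gcongr
    nlinarith
  have hc : 0 ≤ 256 * lam ^ 3 * (1 + x ^ 2) / (27 * x ^ 3) * exp (-|x - t|) := by positivity
  have ha := abs_nonneg (a (k + 1))
  rcases le_or_gt (x / 4) |x - t| with hfar | hnear
  · have hminus := one_add_sq_mul_exp_neg_sq_le_of_sq_le (x := x) (u := x - t)
      (by nlinarith [sq_abs (x - t)])
    nlinarith [mul_le_mul_of_nonneg_left hplus ha, mul_le_mul_of_nonneg_left hminus ha]
  · have hfar : 3 * x / 4 < t := by linarith [(abs_lt.1 hnear).2]
    have hcoeff : |a (k + 1)| ≤ 64 * lam ^ 3 / (9 * x ^ 3) := by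
      refine (abs_a_succ_le k).trans ?_
      rw [div_le_div_iff₀ (by positivity) (by positivity)]
      have := pow_lt_pow_left₀ hfar (by positivity) (three_ne_zero)
      rw [ht_def, mul_pow] at this
      nlinarith
    have hminus : (1 + x ^ 2) * (|a (k + 1)| * exp (-(x - t) ^ 2)) ≤
        256 * lam ^ 3 * (1 + x ^ 2) / (27 * x ^ 3) * exp (-|x - t|) := calc
      _ ≤ (1 + x ^ 2) * (64 * lam ^ 3 / (9 * x ^ 3) * (4 / 3 * exp (-|x - t|))) := by
        gcongr
        exact exp_neg_sq_le_exp_neg_abs _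
      _ = _ := by field_simp; ring
    nlinarith [mul_le_mul_of_nonneg_left hplus ha]

lemma one_add_sq_mul_absSeries_gaussian_le {lam x : ℝ} (hl0 : 0 < lam) (hl1 : lam ≤ 1)
    (hx : 0 ≤ x) (hx10 : 10 ≤ x ^ 2) :
    (1 + x ^ 2) * absSeries (fun t => exp (-t ^ 2)) lam x ≤ 47 / 2 := by
  set c := 256 * lam ^ 3 * (1 + x ^ 2) / (27 * x ^ 3) with hc
  obtain ⟨hsum, hle⟩ := summable_and_tsum_exp_neg_abs_sub_mul_succ_le x hl0
  have hS : Summable fun k : ℕ =>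
      |a (k + 1)| * (exp (-(x + lam * (k + 1)) ^ 2) + exp (-(x - lam * (k + 1)) ^ 2)) := by
    refine .of_nonneg_of_le (fun k => by positivity) (fun k => ?_) (summable_abs_a_succ.mul_right 2)
    gcongr
    linarith [exp_neg_sq_le_one (x + lam * (k + 1)), exp_neg_sq_le_one (x - lam * (k + 1))]
  have hgeom : 2 / (1 - exp (-lam)) ≤ 4 / lam := by
    rw [div_le_div_iff₀ (by linarith [half_le_one_sub_exp_neg hl0.le hl1]) hl0]
    linarith [half_le_one_sub_exp_neg hl0.le hl1]
  have hx3 : 3 ≤ x := by nlinarith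
  calc (1 + x ^ 2) * absSeries (fun t => exp (-t ^ 2)) lam x
      = ∑' k : ℕ, (1 + x ^ 2) *
          (|a (k + 1)| * (exp (-(x + lam * (k + 1)) ^ 2) + exp (-(x - lam * (k + 1)) ^ 2))) :=
        tsum_mul_left.symm
    _ ≤ ∑' k : ℕ, (17 / 2 * |a (k + 1)| + c * exp (-|x - lam * (k + 1)|)) :=
        (hS.mul_left _).tsum_le_tsum (one_add_sq_mul_abs_a_succ_mul_gaussian_le hl0.le hx hx10)
          ((summable_abs_a_succ.mul_left _).add (hsum.mul_left c))
    _ = 17 / 2 * ∑' k, |a (k + 1)| + c * ∑' k : ℕ, exp (-|x - lam * (k + 1)|) := by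
        rw [(summable_abs_a_succ.mul_left _).tsum_add (hsum.mul_left c), tsum_mul_left,
          tsum_mul_left]
    _ ≤ 17 / 2 * 1 + c * (4 / lam) := by
        gcongr
        exacts [tsum_abs_a_succ_le_one, hle.trans hgeom]
    _ ≤ 47 / 2 := by
        have hc4 : c * (4 / lam) = 1024 * lam ^ 2 * (1 + x ^ 2) / (27 * x ^ 3) := by
          rw [hc]; field_simp; ring
        have : 1024 * lam ^ 2 * (1 + x ^ 2) / (27 * x ^ 3) ≤ 15 := by
          rw [div_le_iff₀ (by positivity)]
          nlinarith [mul_nonneg (sub_nonneg.2 hx3) (sq_nonneg x), pow_le_one₀ hl0.le hl1 (n := 2)]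
        linarith

theorem Pinf_gaussian_uniform_decay
    (lam : ℝ) (hlam : lam ∈ Set.Ioo (0 : ℝ) 1) (x : ℝ) :
    |Pinf (fun t => Real.exp (-t ^ 2)) lam x| ≤ 24 / (1 + x ^ 2) := by
  wlog hx : 0 ≤ x generalizing x
  · simpa [Pinf_neg (φ := fun t => exp (-t ^ 2)) (fun t => by rw [neg_sq])] using
      this (-x) (by linarith)
  have h0 (t : ℝ) : 0 ≤ exp (-t ^ 2) := (exp_pos _).le
  rw [le_div_iff₀ (by positivity)]
  calc |Pinf (fun t => exp (-t ^ 2)) lam x| * (1 + x ^ 2)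
      ≤ (2 * exp (-x ^ 2) + absSeries (fun t => exp (-t ^ 2)) lam x) * (1 + x ^ 2) := by
        gcongr
        exact abs_Pinf_le h0 exp_neg_sq_le_one lam x
    _ = 2 * ((1 + x ^ 2) * exp (-x ^ 2)) +
          (1 + x ^ 2) * absSeries (fun t => exp (-t ^ 2)) lam x := by ring
    _ ≤ 24 := by
      rcases le_total (x ^ 2) 10 with hx10 | hx10
      · nlinarith [one_add_sq_mul_exp_neg_sq_le_one x, absSeries_le_two h0 exp_neg_sq_le_one lam x]
      · linarith [one_add_sq_mul_exp_neg_sq_le_of_ten_le hx10,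
          one_add_sq_mul_absSeries_gaussian_le hlam.1 hlam.2.le hx hx10]
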